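/- Let φ: (A,C) → (A',C') be a surjective morphism of preordered finitely generated abelian groups with C = φ⁻¹(C'). If (E,F) is a multifiltered vector space indexed by (A',C') and F is regular, then Res^φ(F) is regular. Moreover, for any morphism φ, if F is a regular multifiltration indexed by (A,C), then Ind_φ(F) is regular. -/

import Mathlib

section MultifiltrationDefs

variable {A : Type*} [AddCommGroup A]

/-- The up-closure `K̃ = {λ | ∃ μ ∈ K, μ ≤ λ}` of a subset with respect to the
preorder defined by the submonoid `C`. -/
def mfTilde (C : AddSubmonoid A) (K : Set A) : Set A := {l : A | ∃ m ∈ K, l - m ∈ C}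

variable {k E : Type*} [Field k] [AddCommGroup E] [Module k E]

/-- `F` is a decreasing multifiltration indexed by `(A, C)`. -/
def mfIsFilt (C : AddSubmonoid A) (F : A → Submodule k E) : Prop :=
  ∀ l m : A, m - l ∈ C → F m ≤ F l

/-- Exhaustive: `E = Σ_λ F^λ E`. -/
def mfExhaustive (F : A → Submodule k E) : Prop := (⨆ l, F l) = ⊤

/-- `F^K E = Σ_{λ ∈ K} F^λ E`. -/
def mfPiece (F : A → Submodule k E) (K : Set A) : Submodule k E := ⨆ l ∈ K, F l

/-- Separated: for each family of subsets whose up-closures have empty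
intersection, the intersection of the corresponding pieces is zero. -/
def mfSeparated (C : AddSubmonoid A) (F : A → Submodule k E) : Prop :=
  ∀ 𝒦 : Set (Set A), (⋂ K ∈ 𝒦, mfTilde C K) = ∅ → (⨅ K ∈ 𝒦, mfPiece F K) = ⊥

/-- Chain-separated: every infinite strictly increasing chain `λ₁ < λ₂ < ⋯`
(`λ < μ` meaning `μ - λ ∈ C` and `λ - μ ∉ C`) eventually has `F^{λᵢ} E = 0`. -/
def mfChainSeparated (C : AddSubmonoid A) (F : A → Submodule k E) : Prop :=
  ∀ l : ℕ → A, (∀ i, l (i + 1) - l i ∈ C ∧ l i - l (i + 1) ∉ C) →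
    ∃ i₀ : ℕ, ∀ i ≥ i₀, F (l i) = ⊥

/-- Regular: `F^{K₁}E ∩ F^{K₂}E = F^{K̃₁ ∩ K̃₂}E` for all subsets `K₁, K₂`. -/
def mfRegular (C : AddSubmonoid A) (F : A → Submodule k E) : Prop :=
  ∀ K₁ K₂ : Set A, mfPiece F K₁ ⊓ mfPiece F K₂ = mfPiece F (mfTilde C K₁ ∩ mfTilde C K₂)

/-- `λ` is a jump point: `F^λ E` strictly contains `Σ_{μ > λ} F^μ E`. -/
def mfJump (C : AddSubmonoid A) (F : A → Submodule k E) (l : A) : Prop :=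
  ¬ F l ≤ ⨆ (m : A) (_ : m - l ∈ C ∧ l - m ∉ C), F m

end MultifiltrationDefs

section IndRes

variable {A A' : Type*} [AddCommGroup A] [AddCommGroup A']
  {k E : Type*} [Field k] [AddCommGroup E] [Module k E]

/-- The induced multifiltration `Ind_φ(F)^λ E = Σ_{μ : λ ≤ φ(μ)} F^μ E`. -/
def mfInd (C' : AddSubmonoid A') (φ : A →+ A') (F : A → Submodule k E) :
    A' → Submodule k E :=
  fun l => ⨆ (m : A) (_ : φ m - l ∈ C'), F m

/-- The restricted multifiltration `Res^φ(F)^λ E = F^{φ(λ)} E`. -/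
def mfRes (φ : A →+ A') (F : A' → Submodule k E) : A → Submodule k E := fun l => F (φ l)

end IndRes

/-! A piece of `Res^φ(F)` is the piece of `F` indexed by the image `φ K`, and a piece of
`Ind_φ(F)` is the piece of `F` indexed by `φ⁻¹(K̃)`, so both statements reduce to identities
between index sets. When `C = φ⁻¹(C')` one has `K̃ = φ⁻¹((φ K)~)`, and surjectivity turns the
image of an intersection of such preimages into the intersection of the images. For `Ind`, the
`φ`-preimage of an up-closed set is up-closed because `φ` is monotone, and an up-closed set is
its own up-closure. -/

section Tilde

variable {A A' : Type*} [AddCommGroup A] [AddCommGroup A']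

theorem subset_mfTilde (C : AddSubmonoid A) (K : Set A) : K ⊆ mfTilde C K :=
  fun l hl => ⟨l, hl, by simp⟩

theorem mem_mfTilde_of_sub_mem {C : AddSubmonoid A} {K : Set A} {l m : A}
    (hl : l ∈ mfTilde C K) (hml : m - l ∈ C) : m ∈ mfTilde C K := by
  obtain ⟨k, hk, hlk⟩ := hl
  exact ⟨k, hk, by simpa using C.add_mem hml hlk⟩

theorem mfTilde_eq_self {C : AddSubmonoid A} {S : Set A}
    (hS : ∀ l ∈ S, ∀ m, m - l ∈ C → m ∈ S) : mfTilde C S = S :=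
  Set.Subset.antisymm (fun _ ⟨l, hl, hml⟩ => hS l hl _ hml) (subset_mfTilde C S)

theorem mfTilde_inter_mfTilde (C : AddSubmonoid A) (K₁ K₂ : Set A) :
    mfTilde C (mfTilde C K₁ ∩ mfTilde C K₂) = mfTilde C K₁ ∩ mfTilde C K₂ :=
  mfTilde_eq_self fun _ hl _ hml =>
    ⟨mem_mfTilde_of_sub_mem hl.1 hml, mem_mfTilde_of_sub_mem hl.2 hml⟩

theorem mfTilde_preimage_mfTilde {C : AddSubmonoid A} {C' : AddSubmonoid A'} {φ : A →+ A'}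
    (hφ : ∀ a ∈ C, φ a ∈ C') (K : Set A') :
    mfTilde C (φ ⁻¹' mfTilde C' K) = φ ⁻¹' mfTilde C' K :=
  mfTilde_eq_self fun l hl m hml =>
    mem_mfTilde_of_sub_mem (m := φ m) hl (by simpa using hφ _ hml)

theorem mfTilde_eq_preimage_mfTilde_image {C : AddSubmonoid A} {C' : AddSubmonoid A'}
    {φ : A →+ A'} (hC : ∀ a, a ∈ C ↔ φ a ∈ C') (K : Set A) :
    mfTilde C K = φ ⁻¹' mfTilde C' (φ '' K) := by
  ext l
  simp [mfTilde, hC]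

theorem image_mfTilde_inter_mfTilde {C : AddSubmonoid A} {C' : AddSubmonoid A'}
    {φ : A →+ A'} (hsurj : Function.Surjective φ) (hC : ∀ a, a ∈ C ↔ φ a ∈ C')
    (K₁ K₂ : Set A) :
    φ '' (mfTilde C K₁ ∩ mfTilde C K₂) = mfTilde C' (φ '' K₁) ∩ mfTilde C' (φ '' K₂) := by
  rw [mfTilde_eq_preimage_mfTilde_image hC, mfTilde_eq_preimage_mfTilde_image hC,
    ← Set.preimage_inter, Set.image_preimage_eq _ hsurj]

end Tilde

section Pieces

variable {A A' : Type*} [AddCommGroup A] [AddCommGroup A']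
  {k E : Type*} [Field k] [AddCommGroup E] [Module k E]

theorem mfPiece_mfRes (φ : A →+ A') (F : A' → Submodule k E) (K : Set A) :
    mfPiece (mfRes φ F) K = mfPiece F (φ '' K) :=
  (iSup_image (g := F)).symm

theorem mfPiece_mfInd (C' : AddSubmonoid A') (φ : A →+ A') (F : A → Submodule k E)
    (K : Set A') : mfPiece (mfInd C' φ F) K = mfPiece F (φ ⁻¹' mfTilde C' K) := by
  apply le_antisymm
  · exact iSup₂_le fun l hl => iSup₂_le fun m hm => le_iSup₂_of_le m ⟨l, hl, hm⟩ le_rfl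
  · exact iSup₂_le fun m ⟨l, hl, hm⟩ => le_iSup₂_of_le l hl (le_iSup₂_of_le m hm le_rfl)

end Pieces

theorem res_ind_regular_general {k : Type*} [Field k] {A A' : Type*} [AddCommGroup A]
    [AddCommGroup A']
    (C : AddSubmonoid A) (C' : AddSubmonoid A') (φ : A →+ A')
    (hφ : ∀ a ∈ C, φ a ∈ C')
    {E : Type*} [AddCommGroup E] [Module k E] :
    (Function.Surjective φ → (∀ a : A, a ∈ C ↔ φ a ∈ C') →
      ∀ F : A' → Submodule k E, mfIsFilt C' F → mfRegular C' F →
        mfRegular C (mfRes φ F)) ∧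
    (∀ F : A → Submodule k E, mfIsFilt C F → mfRegular C F →
      mfRegular C' (mfInd C' φ F)) := by
  constructor
  · intro hsurj hC F _ hreg K₁ K₂
    rw [mfPiece_mfRes, mfPiece_mfRes, mfPiece_mfRes, hreg,
      image_mfTilde_inter_mfTilde hsurj hC]
  · intro F _ hreg K₁ K₂
    rw [mfPiece_mfInd, mfPiece_mfInd, mfPiece_mfInd, hreg, mfTilde_preimage_mfTilde hφ,
      mfTilde_preimage_mfTilde hφ, mfTilde_inter_mfTilde, Set.preimage_inter]

/-- If `φ` is surjective with `C = φ⁻¹(C')`, then `Res^φ`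
preserves regularity; moreover for any morphism `φ` of preordered f.g. abelian
groups, `Ind_φ` preserves regularity. -/
theorem res_ind_regular {k : Type*} [Field k] {A A' : Type*} [AddCommGroup A]
    [AddCommGroup A'] [AddGroup.FG A] [AddGroup.FG A']
    (C : AddSubmonoid A) (C' : AddSubmonoid A') (φ : A →+ A')
    (hφ : ∀ a ∈ C, φ a ∈ C')
    {E : Type*} [AddCommGroup E] [Module k E] :
    (Function.Surjective φ → (∀ a : A, a ∈ C ↔ φ a ∈ C') →
      ∀ F : A' → Submodule k E, mfIsFilt C' F → mfRegular C' F →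
        mfRegular C (mfRes φ F)) ∧
    (∀ F : A → Submodule k E, mfIsFilt C F → mfRegular C F →
      mfRegular C' (mfInd C' φ F)) :=
  res_ind_regular_general C C' φ hφ
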